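/- For every integer m ≥ 1, W̃_{2m+5}(p) − W̃_{2m+3}(p) + t_{m+3} p^{m+3} q^{m+1} = p^m q^m [ d_{m,0} p^5 − 2 d_{m,1} p^4 q + (d_{m,0} + 3 d_{m,1} + 2 d_{m,2}) p^3 q^2 − (d_{m,0} + d_{m,1} + 3 d_{m,2} + d_{m,3}) p^2 q^3 − (3 d_{m,0} + 4 d_{m,1} + 2 d_{m,2}) p q^4 − (d_{m,0} + d_{m,1}) q^5 + t_{m+3} p^3 q ], where d_{m,j} := C(2m, m+j) − C(2m, m+j+1) and t_m := (1/m)·C(2m−2, m−1). -/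

import Mathlib

/-!
Reversing a path turns the event `max(1, M_n) - S_n ≤ k` into "`S_n ≥ 1 - k` and the walk never
goes below `-k`", and by the reflection principle the paths in it with `u` up-steps number
`C(n,u) - C(n,u+k+1)`. Hence `P(max(1, M_n) - S_n ≤ k)` is the truncated binomial sum
`Σ_{u ≥ t} (C(n,u) - C(n,u+k+1)) p^u q^(n-u)`, where `2t + k ∈ {n+1, n+2}`. Going from `n` to
`n + 2` moves the truncation point up by one, and two applications of Pascal's rule show that the
sum changes only by the boundary term
`p^t q^(n+1-t) (p (C(n+1,t) - C(n+1,t+k+1)) - (C(n,t) - C(n,t+k+1)))`.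
For `n = 2m`, Pascal's rule and the symmetry of row `2m` express these boundary terms through the
`d_{m,j}`; the `t_{m+3}` terms on the two sides cancel.
-/

open Finset

/-- Probability weight of a single path of length `N`. -/
noncomputable def pathProb (p : ℝ) (N : ℕ) (x : Fin N → Bool) : ℝ :=
  p ^ (Finset.univ.filter (fun i => x i = true)).card *
    (1 - p) ^ (N - (Finset.univ.filter (fun i => x i = true)).card)

open Classical in
/-- Probability of an event `E` for the `N`-step Bernoulli walk. -/
noncomputable def walkProb (p : ℝ) (N : ℕ) (E : Set (Fin N → Bool)) : ℝ :=
  ∑ x : Fin N → Bool, if x ∈ E then pathProb p N x else 0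

/-- Partial sum `S_j` of the walk given by the path `x`. -/
def walkS (N : ℕ) (x : Fin N → Bool) (j : ℕ) : ℤ :=
  ∑ i ∈ Finset.univ.filter (fun i : Fin N => (i : ℕ) < j), (if x i then (1 : ℤ) else -1)

/-- Running maximum `M_N = max_{0 ≤ j ≤ N} S_j`. -/
def walkM (N : ℕ) (x : Fin N → Bool) : ℤ :=
  (Finset.range (N + 1)).sup' Finset.nonempty_range_add_one (fun j => walkS N x j)

/-- `U_n(p) = P(M_n ≤ 1)`. -/
noncomputable def U (n : ℕ) (p : ℝ) : ℝ :=
  walkProb p n {x | walkM n x ≤ 1}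

/-- The polynomials `Δπ_{3,k}` for `k = 0,…,4` (and `0` for `k ≥ 5`). -/
noncomputable def deltaPi3 (p : ℝ) : ℕ → ℝ
  | 0 => p ^ 3
  | 1 => -(p ^ 2 * (1 - p)) + 2 * p * (1 - p) ^ 2 + (1 - p) ^ 3
  | 2 => -(p ^ 3) + 2 * p ^ 2 * (1 - p) + p * (1 - p) ^ 2
  | 3 => p ^ 2 * (1 - p)
  | 4 => p ^ 3
  | _ => 0

/-- `W̃_n(p) = Σ_{k=0}^{4} P(max(1, M_{n−3}) − S_{n−3} ≤ k) · Δπ_{3,k}`. -/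
noncomputable def Wt (n : ℕ) (p : ℝ) : ℝ :=
  ∑ k ∈ Finset.range 5,
    walkProb p (n - 3) {x | max 1 (walkM (n - 3) x) - walkS (n - 3) x (n - 3) ≤ (k : ℤ)} *
      deltaPi3 p k

/-- `d_{m,j} = C(2m, m+j) − C(2m, m+j+1)`, as a real number. -/
noncomputable def dCoef (m j : ℕ) : ℝ :=
  ((2 * m).choose (m + j) : ℝ) - ((2 * m).choose (m + j + 1) : ℝ)

section Walk

variable {n : ℕ}

def upCount (x : Fin n → Bool) : ℕ := #{i | x i = true}

lemma pathProb_eq (p : ℝ) (x : Fin n → Bool) :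
    pathProb p n x = p ^ upCount x * (1 - p) ^ (n - upCount x) := rfl

lemma upCount_le (x : Fin n → Bool) : upCount x ≤ n :=
  (card_le_univ _).trans_eq (Fintype.card_fin n)

lemma upCount_comp_rev (x : Fin n → Bool) : upCount (x ∘ Fin.rev) = upCount x :=
  card_nbij' Fin.rev Fin.rev (by intro i; simp) (by intro i; simp) (fun i _ => Fin.rev_rev i)
    (fun i _ => Fin.rev_rev i)

lemma card_upCount_eq (u : ℕ) : #{x : Fin n → Bool | upCount x = u} = n.choose u := by
  have : n.choose u = #(univ.powersetCard u : Finset (Finset (Fin n))) := by simp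
  rw [this]
  refine card_nbij' (fun x => univ.filter fun i => x i = true) (fun s i => decide (i ∈ s))
    (fun x hx => ?_) (fun s hs => ?_) (fun x _ => ?_) (fun s _ => ?_)
  · simpa [upCount] using (mem_filter.1 hx).2
  · exact mem_filter.2 ⟨mem_univ _, by simpa [upCount] using mem_powersetCard_univ.1 hs⟩
  · funext i; simp
  · ext i; simp

@[simp]
lemma walkS_zero (x : Fin n → Bool) : walkS n x 0 = 0 := by
  simp [walkS]

lemma walkS_succ (x : Fin n → Bool) {j : ℕ} (hj : j < n) :
    walkS n x (j + 1) = walkS n x j + if x ⟨j, hj⟩ then 1 else -1 := by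
  have : ({i | (i : ℕ) < j + 1} : Finset (Fin n)) =
      insert ⟨j, hj⟩ ({i | (i : ℕ) < j} : Finset (Fin n)) := by
    ext i
    simp only [mem_filter, mem_univ, true_and, mem_insert, Fin.ext_iff]
    omega
  rw [walkS, this, sum_insert (by simp), add_comm]
  rfl

lemma walkS_of_le (x : Fin n → Bool) {j : ℕ} (hj : n ≤ j) : walkS n x j = walkS n x n := by
  unfold walkS
  congr 1
  ext i
  simp only [mem_filter, mem_univ, true_and]
  omega

lemma walkS_congr {x y : Fin n → Bool} {j : ℕ} (h : ∀ i : Fin n, (i : ℕ) < j → x i = y i) :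
    walkS n x j = walkS n y j :=
  sum_congr rfl fun i hi => by rw [h i (mem_filter.1 hi).2]

lemma walkS_sub_one_le_succ (x : Fin n → Bool) (j : ℕ) : walkS n x j - 1 ≤ walkS n x (j + 1) := by
  by_cases hj : j < n
  · rw [walkS_succ x hj]
    split <;> omega
  · rw [walkS_of_le x (by omega : n ≤ j + 1), walkS_of_le x (by omega : n ≤ j)]
    omega

lemma walkS_self_eq_sum (x : Fin n → Bool) :
    walkS n x n = ∑ i, if x i then (1 : ℤ) else -1 := by
  simp [walkS]

lemma walkS_self (x : Fin n → Bool) : walkS n x n = 2 * (upCount x : ℤ) - n := by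
  have hstep : ∀ b : Bool, (if b then (1 : ℤ) else -1) = 2 * (if b = true then 1 else 0) - 1 := by
    decide
  simp only [walkS_self_eq_sum, hstep, sum_sub_distrib, ← mul_sum, sum_boole]
  simp [upCount]

lemma walkS_comp_rev (x : Fin n → Bool) (j : ℕ) :
    walkS n (x ∘ Fin.rev) j = walkS n x n - walkS n x (n - j) := by
  have hrev : walkS n (x ∘ Fin.rev) j
      = ∑ i ∈ {i : Fin n | ¬ (i : ℕ) < n - j}, if x i then (1 : ℤ) else -1 := by
    refine sum_nbij' Fin.rev Fin.rev ?_ ?_ (by simp) (by simp) (by simp)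
    all_goals
      intro i hi
      simp only [mem_filter, mem_univ, true_and, Fin.val_rev] at hi ⊢
      omega
  have hsplit := sum_filter_add_sum_filter_not univ (fun i : Fin n => (i : ℕ) < n - j)
    (fun i => if x i then (1 : ℤ) else -1)
  rw [hrev, walkS_self_eq_sum, ← hsplit]
  simp [walkS]

lemma walkM_le_iff (x : Fin n → Bool) (z : ℤ) : walkM n x ≤ z ↔ ∀ j, walkS n x j ≤ z := by
  rw [walkM, sup'_le_iff]
  refine ⟨fun h j => ?_, fun h j _ => h j⟩
  rcases le_or_gt j n with hj | hj
  · exact h j (mem_range.2 (by omega))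
  · rw [walkS_of_le x hj.le]
    exact h n (by simp)

lemma exists_walkS_eq_of_le {x : Fin n → Bool} {ℓ : ℤ} (hℓ : ℓ ≤ 0) :
    ∀ {j}, walkS n x j ≤ ℓ → ∃ i, walkS n x i = ℓ
  | 0, h => ⟨0, by simp at h ⊢; omega⟩
  | j + 1, h => by
    by_cases hj : walkS n x j ≤ ℓ
    · exact exists_walkS_eq_of_le hℓ hj
    · exact ⟨j + 1, by have := walkS_sub_one_le_succ x j; omega⟩

end Walk

section Reflection

variable {n : ℕ}

-- Visits are looked for among all `j : ℕ`; this is harmless since `walkS n x j` stays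
-- constant for `j ≥ n` (`walkS_of_le`).
open Classical in
noncomputable def reflectFromHit (ℓ : ℤ) (x : Fin n → Bool) : Fin n → Bool :=
  if h : ∃ j, walkS n x j = ℓ then fun i => if (i : ℕ) < Nat.find h then x i else !x i else x

variable {ℓ : ℤ} {x : Fin n → Bool}

lemma find_walkS_eq_le (h : ∃ j, walkS n x j = ℓ) : Nat.find h ≤ n := by
  by_contra! hn
  exact Nat.find_min h hn (by rw [← walkS_of_le x hn.le]; exact Nat.find_spec h)

lemma reflectFromHit_of_lt (h : ∃ j, walkS n x j = ℓ) {i : Fin n} (hi : (i : ℕ) < Nat.find h) :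
    reflectFromHit ℓ x i = x i := by
  simp [reflectFromHit, h, hi]

lemma reflectFromHit_of_ge (h : ∃ j, walkS n x j = ℓ) {i : Fin n} (hi : Nat.find h ≤ i) :
    reflectFromHit ℓ x i = !x i := by
  simp [reflectFromHit, h, hi.not_gt]

lemma walkS_reflectFromHit_of_le (h : ∃ j, walkS n x j = ℓ) {j : ℕ} (hj : j ≤ Nat.find h) :
    walkS n (reflectFromHit ℓ x) j = walkS n x j :=
  walkS_congr fun i hi => reflectFromHit_of_lt h (by omega)

lemma walkS_reflectFromHit_of_ge (h : ∃ j, walkS n x j = ℓ) {j : ℕ} (hj : Nat.find h ≤ j) :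
    walkS n (reflectFromHit ℓ x) j = 2 * ℓ - walkS n x j := by
  induction j, hj using Nat.le_induction with
  | base => rw [walkS_reflectFromHit_of_le h le_rfl, Nat.find_spec h]; ring
  | succ j hj ih =>
    by_cases hn : j < n
    · rw [walkS_succ _ hn, walkS_succ x hn, ih, reflectFromHit_of_ge h (by simpa using hj)]
      cases x ⟨j, hn⟩ <;> simp <;> ring
    · rw [walkS_of_le _ (by omega : n ≤ j + 1), walkS_of_le x (by omega : n ≤ j + 1),
        ← walkS_of_le _ (by omega : n ≤ j), ← walkS_of_le x (by omega : n ≤ j), ih]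

lemma exists_walkS_reflectFromHit_eq (h : ∃ j, walkS n x j = ℓ) :
    ∃ j, walkS n (reflectFromHit ℓ x) j = ℓ :=
  ⟨Nat.find h, (walkS_reflectFromHit_of_le h le_rfl).trans (Nat.find_spec h)⟩

lemma find_reflectFromHit (h : ∃ j, walkS n x j = ℓ) :
    Nat.find (exists_walkS_reflectFromHit_eq h) = Nat.find h := by
  refine le_antisymm
    (Nat.find_min' _ ((walkS_reflectFromHit_of_le h le_rfl).trans (Nat.find_spec h))) ?_
  by_contra! hlt
  exact Nat.find_min h hlt ((walkS_reflectFromHit_of_le h hlt.le).symm.trans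
    (Nat.find_spec (exists_walkS_reflectFromHit_eq h)))

lemma reflectFromHit_involutive (ℓ : ℤ) : Function.Involutive (reflectFromHit (n := n) ℓ) := by
  intro x
  by_cases h : ∃ j, walkS n x j = ℓ
  · funext i
    have h' := exists_walkS_reflectFromHit_eq h
    by_cases hi : (i : ℕ) < Nat.find h
    · rw [reflectFromHit_of_lt h' (by rwa [find_reflectFromHit h]), reflectFromHit_of_lt h hi]
    · rw [reflectFromHit_of_ge h' (by rw [find_reflectFromHit h]; omega),
        reflectFromHit_of_ge h (by omega), Bool.not_not]
  · simp [reflectFromHit, h]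

lemma upCount_reflectFromHit (h : ∃ j, walkS n x j = ℓ) :
    (upCount (reflectFromHit ℓ x) : ℤ) = n + ℓ - upCount x := by
  have := walkS_reflectFromHit_of_ge h (find_walkS_eq_le h)
  rw [walkS_self, walkS_self] at this
  omega

end Reflection

section Counting

open scoped Classical

variable {n : ℕ}

lemma exists_walkS_eq_neg_succ_iff (x : Fin n → Bool) (k : ℕ) :
    (∃ j, walkS n x j = -(k + 1)) ↔ ¬ ∀ j, -(k : ℤ) ≤ walkS n x j := by
  refine ⟨fun ⟨j, hj⟩ h => by have := h j; omega, fun h => ?_⟩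
  push Not at h
  obtain ⟨j, hj⟩ := h
  exact exists_walkS_eq_of_le (by omega) (by omega : walkS n x j ≤ -(k + 1))

lemma card_hit_eq_choose (k u : ℕ) (h : n ≤ 2 * u + k + 1) :
    #{x : Fin n → Bool | (∃ j, walkS n x j = -(k + 1)) ∧ upCount x = u} =
      n.choose (u + k + 1) := by
  rcases le_or_gt (u + k + 1) n with hn | hn
  · rw [← Nat.choose_symm hn, ← card_upCount_eq]
    refine card_nbij' (reflectFromHit (-(k + 1))) (reflectFromHit (-(k + 1)))
      (fun x hx => ?_) (fun y hy => ?_) (fun x _ => reflectFromHit_involutive _ x)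
      (fun y _ => reflectFromHit_involutive _ y)
    · rw [mem_coe, mem_filter] at hx ⊢
      obtain ⟨-, hhit, hu⟩ := hx
      have := upCount_reflectFromHit hhit
      exact ⟨mem_univ _, by omega⟩
    · rw [mem_coe, mem_filter] at hy ⊢
      have hu := hy.2
      have hhit : ∃ j, walkS n y j = -(k + 1) :=
        exists_walkS_eq_of_le (j := n) (by omega) (by rw [walkS_self]; omega)
      have := upCount_reflectFromHit hhit
      exact ⟨mem_univ _, exists_walkS_reflectFromHit_eq hhit, by omega⟩
  · rw [Nat.choose_eq_zero_of_lt hn, card_eq_zero, filter_eq_empty_iff]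
    rintro x - ⟨hhit, rfl⟩
    have := upCount_reflectFromHit hhit
    omega

lemma card_forall_le_walkS_add_choose (k u : ℕ) (h : n ≤ 2 * u + k + 1) :
    #{x : Fin n → Bool | (∀ j, -(k : ℤ) ≤ walkS n x j) ∧ upCount x = u} +
      n.choose (u + k + 1) = n.choose u := by
  have hsplit := card_filter_add_card_filter_not (s := {x : Fin n → Bool | upCount x = u})
    (fun x => ∀ j, -(k : ℤ) ≤ walkS n x j)
  rw [filter_filter, filter_filter] at hsplit
  rw [← card_hit_eq_choose k u h, ← card_upCount_eq u, ← hsplit]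
  congr 2 <;> ext x <;>
    simp only [mem_filter, mem_univ, true_and, exists_walkS_eq_neg_succ_iff, and_comm]

lemma drawdown_le_iff (x : Fin n → Bool) (k : ℤ) :
    max 1 (walkM n x) - walkS n x n ≤ k ↔
      1 - k ≤ walkS n x n ∧ ∀ j, -k ≤ walkS n (x ∘ Fin.rev) j := by
  simp only [sub_le_iff_le_add, max_le_iff, walkM_le_iff, walkS_comp_rev]
  refine ⟨fun ⟨h1, h2⟩ => ⟨by omega, fun j => by have := h2 (n - j); omega⟩,
    fun ⟨h1, h2⟩ => ⟨by omega, fun j => ?_⟩⟩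
  rcases le_or_gt j n with hj | hj
  · have := h2 (n - j)
    rw [Nat.sub_sub_self hj] at this
    omega
  · have := h2 0
    rw [walkS_of_le x hj.le]
    simp only [Nat.sub_zero] at this
    omega

lemma card_drawdown_le_add_choose (k u : ℕ) (h : n + 1 ≤ 2 * u + k) :
    #{x : Fin n → Bool | max 1 (walkM n x) - walkS n x n ≤ k ∧ upCount x = u} +
      n.choose (u + k + 1) = n.choose u := by
  rw [← card_forall_le_walkS_add_choose k u (by omega)]
  congr 1
  have hrev : Function.Involutive fun x : Fin n → Bool => x ∘ Fin.rev := fun x => by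
    funext i; simp
  refine card_equiv hrev.toPerm fun x => ?_
  simp only [mem_filter, mem_univ, true_and, Function.Involutive.coe_toPerm, drawdown_le_iff,
    upCount_comp_rev]
  constructor
  · exact fun ⟨⟨_, h⟩, hu⟩ => ⟨h, hu⟩
  · rintro ⟨h', hu⟩
    refine ⟨⟨?_, h'⟩, hu⟩
    rw [walkS_self]
    omega

lemma card_drawdown_le_eq_zero (k u : ℕ) (h : 2 * u + k < n + 1) :
    #{x : Fin n → Bool | max 1 (walkM n x) - walkS n x n ≤ k ∧ upCount x = u} = 0 := by
  rw [card_eq_zero, filter_eq_empty_iff]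
  rintro x - ⟨hx, rfl⟩
  have := ((drawdown_le_iff x k).1 hx).1
  rw [walkS_self] at this
  omega

end Counting

lemma walkProb_eq_sum_card (p : ℝ) (n : ℕ) (P : (Fin n → Bool) → Prop) [DecidablePred P] :
    walkProb p n {x | P x} =
      ∑ u ∈ range (n + 1), (#{x | P x ∧ upCount x = u} : ℝ) * p ^ u * (1 - p) ^ (n - u) := by
  have hfilter : walkProb p n {x | P x} = ∑ x with P x, pathProb p n x := by
    rw [walkProb, sum_filter]
    exact sum_congr rfl fun x _ => by split_ifs <;> simp_all
  rw [hfilter, ← sum_fiberwise_of_maps_to (g := upCount) (t := range (n + 1))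
      fun x _ => mem_range.2 (Nat.lt_succ_of_le (upCount_le x))]
  refine sum_congr rfl fun u _ => ?_
  rw [filter_filter, sum_congr rfl fun x hx => by rw [pathProb_eq, (mem_filter.1 hx).2.2],
    sum_const, nsmul_eq_mul, mul_assoc]

noncomputable def drawdownCDF (p : ℝ) (n k : ℕ) : ℝ :=
  walkProb p n {x | max 1 (walkM n x) - walkS n x n ≤ (k : ℤ)}

lemma Wt_add_three (n : ℕ) (p : ℝ) :
    Wt (n + 3) p = ∑ k ∈ range 5, drawdownCDF p n k * deltaPi3 p k :=
  rfl

lemma drawdownCDF_eq_sum (p : ℝ) (n k : ℕ) :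
    drawdownCDF p n k = ∑ u ∈ range (n + 1),
      (if n + 1 ≤ 2 * u + k then (n.choose u - n.choose (u + k + 1) : ℝ) else 0) *
        p ^ u * (1 - p) ^ (n - u) := by
  rw [drawdownCDF, walkProb_eq_sum_card]
  refine sum_congr rfl fun u _ => ?_
  split_ifs with h
  · rw [← card_drawdown_le_add_choose k u h, Nat.cast_add, add_sub_cancel_right]
  · rw [card_drawdown_le_eq_zero k u (by omega), Nat.cast_zero]

section BinomTail

variable {R : Type*} [CommRing R] (p q : R)

def binomTail (N a t : ℕ) : R :=
  ∑ ij ∈ antidiagonal N, if t ≤ ij.1 then (N.choose (ij.1 + a) : R) * p ^ ij.1 * q ^ ij.2 else 0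

lemma binomTail_eq_add (N a t : ℕ) :
    binomTail p q N a t = N.choose (t + a) * p ^ t * q ^ (N - t) + binomTail p q N a (t + 1) := by
  have hpeak : (N.choose (t + a) : R) * p ^ t * q ^ (N - t) = ∑ i ∈ range (N + 1),
      if t = i then (N.choose (i + a) : R) * p ^ i * q ^ (N - i) else 0 := by
    simp only [sum_ite_eq, mem_range]
    split_ifs with ht
    · rfl
    · rw [Nat.choose_eq_zero_of_lt (by omega), Nat.cast_zero, zero_mul, zero_mul]
  simp only [binomTail, Nat.sum_antidiagonal_eq_sum_range_succ_mk]
  rw [hpeak, ← sum_add_distrib]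
  refine sum_congr rfl fun i _ => ?_
  split_ifs <;> first | omega | simp

lemma binomTail_succ_succ (N a t : ℕ) :
    binomTail p q (N + 1) a (t + 1) = p * binomTail p q N a t + q * binomTail p q N a (t + 1) := by
  set g : ℕ × ℕ → R :=
    fun ij => if t + 1 ≤ ij.1 then (N.choose (ij.1 + a) : R) * p ^ ij.1 * q ^ ij.2 else 0
  have hg : ∑ ij ∈ antidiagonal N, g (ij.1 + 1, ij.2) = q * binomTail p q N a (t + 1) := by
    have h := (Nat.sum_antidiagonal_succ (f := g) (n := N)).symm.trans Nat.sum_antidiagonal_succ'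
    have h0 : g (0, N + 1) = 0 := if_neg (Nat.not_succ_le_zero t)
    have hN : g (N + 1, 0) = 0 := by simp [g, Nat.choose_eq_zero_of_lt (by omega : N < N + 1 + a)]
    rw [h0, hN, zero_add, zero_add] at h
    rw [h, binomTail, mul_sum]
    exact sum_congr rfl fun ij _ => by simp only [g]; split_ifs <;> ring
  rw [binomTail, Nat.sum_antidiagonal_succ, if_neg (by omega), zero_add, binomTail, mul_sum, ← hg,
    ← sum_add_distrib]
  refine sum_congr rfl fun ij _ => ?_
  simp only [g, Nat.add_le_add_iff_right]
  split_ifs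
  · rw [show ij.1 + 1 + a = ij.1 + a + 1 by ring, Nat.choose_succ_succ', Nat.cast_add]
    ring
  · ring

lemma binomTail_add_two (hpq : p + q = 1) (N a t : ℕ) :
    binomTail p q (N + 2) a (t + 1) = binomTail p q N a t +
      p ^ t * q ^ (N + 1 - t) * (p * (N + 1).choose (t + a) - N.choose (t + a)) := by
  have hq : (N.choose (t + a) : R) * q ^ (N + 1 - t) = N.choose (t + a) * q ^ (N - t) * q := by
    rcases le_or_gt t N with ht | ht
    · rw [Nat.sub_add_comm ht, pow_succ, mul_assoc]
    · rw [Nat.choose_eq_zero_of_lt (by omega), Nat.cast_zero, zero_mul, zero_mul, zero_mul]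
  rw [binomTail_succ_succ, binomTail_eq_add p q (N + 1) a t, binomTail_succ_succ,
    binomTail_eq_add p q N a t]
  linear_combination ((p + 1) * (N.choose (t + a) * p ^ t * q ^ (N - t)) +
    (p + q + 1) * binomTail p q N a (t + 1)) * hpq + p ^ t * hq

end BinomTail

lemma drawdownCDF_eq_binomTail (p : ℝ) {N k t : ℕ} (ht : ∀ u, N + 1 ≤ 2 * u + k ↔ t ≤ u) :
    drawdownCDF p N k = binomTail p (1 - p) N 0 t - binomTail p (1 - p) N (k + 1) t := by
  rw [drawdownCDF_eq_sum, binomTail, binomTail, Nat.sum_antidiagonal_eq_sum_range_succ_mk,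
    Nat.sum_antidiagonal_eq_sum_range_succ_mk, ← sum_sub_distrib]
  refine sum_congr rfl fun u _ => ?_
  simp only [ht, add_zero, add_assoc]
  split_ifs <;> ring

lemma drawdownCDF_add_two_sub (p : ℝ) {N k t : ℕ} (h₁ : N + 1 ≤ 2 * t + k)
    (h₂ : 2 * t + k ≤ N + 2) :
    drawdownCDF p (N + 2) k - drawdownCDF p N k = p ^ t * (1 - p) ^ (N + 1 - t) *
      (p * ((N + 1).choose t - (N + 1).choose (t + k + 1)) -
        (N.choose t - N.choose (t + k + 1))) := by
  rw [drawdownCDF_eq_binomTail p (t := t + 1) (fun u => by omega),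
    drawdownCDF_eq_binomTail p (t := t) (fun u => by omega),
    binomTail_add_two p (1 - p) (by ring), binomTail_add_two p (1 - p) (by ring)]
  simp only [add_zero, add_assoc]
  ring

lemma Wt_add_five_sub_Wt_add_three (N : ℕ) (p : ℝ) :
    Wt (N + 5) p - Wt (N + 3) p =
      ∑ k ∈ range 5, (drawdownCDF p (N + 2) k - drawdownCDF p N k) * deltaPi3 p k := by
  rw [Wt_add_three, Wt_add_three, ← sum_sub_distrib]
  simp only [sub_mul]

theorem Wt_odd_minus_odd_general (p : ℝ) (m : ℕ) (hm : 1 ≤ m) :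
    Wt (2 * m + 5) p - Wt (2 * m + 3) p +
        (((2 * m + 4).choose (m + 2) : ℝ) / (m + 3)) * p ^ (m + 3) * (1 - p) ^ (m + 1) =
      p ^ m * (1 - p) ^ m *
        (dCoef m 0 * p ^ 5 - 2 * dCoef m 1 * p ^ 4 * (1 - p) +
          (dCoef m 0 + 3 * dCoef m 1 + 2 * dCoef m 2) * p ^ 3 * (1 - p) ^ 2 -
          (dCoef m 0 + dCoef m 1 + 3 * dCoef m 2 + dCoef m 3) * p ^ 2 * (1 - p) ^ 3 -
          (3 * dCoef m 0 + 4 * dCoef m 1 + 2 * dCoef m 2) * p * (1 - p) ^ 4 -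
          (dCoef m 0 + dCoef m 1) * (1 - p) ^ 5 +
          (((2 * m + 4).choose (m + 2) : ℝ) / (m + 3)) * p ^ 3 * (1 - p)) := by
  obtain ⟨a, rfl⟩ : ∃ a, m = a + 1 := ⟨m - 1, by omega⟩
  have pascal : ∀ j, ((2 * a + 3).choose (j + 1) : ℝ) =
      (2 * a + 2).choose j + (2 * a + 2).choose (j + 1) := fun j => by
    exact_mod_cast Nat.choose_succ_succ' (2 * a + 2) j
  have symm₃ : (2 * a + 3).choose a = (2 * a + 3).choose (a + 3) :=
    (Nat.choose_symm_of_eq_add (by ring)).symm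
  have symm₂ : (2 * a + 2).choose a = (2 * a + 2).choose (a + 2) :=
    (Nat.choose_symm_of_eq_add (by ring)).symm
  rw [show 2 * (a + 1) + 5 = 2 * a + 2 + 5 by ring, show 2 * (a + 1) + 3 = 2 * a + 2 + 3 by ring,
    Wt_add_five_sub_Wt_add_three]
  simp only [sum_range_succ, sum_range_zero, zero_add]
  rw [drawdownCDF_add_two_sub p (k := 0) (t := a + 2) (by omega) (by omega),
    drawdownCDF_add_two_sub p (k := 1) (t := a + 1) (by omega) (by omega),
    drawdownCDF_add_two_sub p (k := 2) (t := a + 1) (by omega) (by omega),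
    drawdownCDF_add_two_sub p (k := 3) (t := a) (by omega) (by omega),
    drawdownCDF_add_two_sub p (k := 4) (t := a) (by omega) (by omega)]
  simp only [dCoef, deltaPi3, add_assoc, Nat.reduceAdd, add_zero, mul_add, mul_one]
  rw [show 2 * a + 3 - (a + 2) = a + 1 by omega, show 2 * a + 3 - (a + 1) = a + 2 by omega,
    show 2 * a + 3 - a = a + 3 by omega, symm₃, pascal a, pascal (a + 1), pascal (a + 2),
    pascal (a + 3), pascal (a + 4), symm₂]
  ring

/-- Formula for `W̃_{2m+5}(p) − W̃_{2m+3}(p) + t_{m+3} p^{m+3} q^{m+1}`,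
where `t_{m+3} = C(2m+4, m+2)/(m+3)`. -/
theorem Wt_odd_minus_odd (p : ℝ) (hp : p ∈ Set.Ioo (0 : ℝ) 1) (m : ℕ) (hm : 1 ≤ m) :
    Wt (2 * m + 5) p - Wt (2 * m + 3) p +
        (((2 * m + 4).choose (m + 2) : ℝ) / (m + 3)) * p ^ (m + 3) * (1 - p) ^ (m + 1) =
      p ^ m * (1 - p) ^ m *
        (dCoef m 0 * p ^ 5 - 2 * dCoef m 1 * p ^ 4 * (1 - p) +
          (dCoef m 0 + 3 * dCoef m 1 + 2 * dCoef m 2) * p ^ 3 * (1 - p) ^ 2 -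
          (dCoef m 0 + dCoef m 1 + 3 * dCoef m 2 + dCoef m 3) * p ^ 2 * (1 - p) ^ 3 -
          (3 * dCoef m 0 + 4 * dCoef m 1 + 2 * dCoef m 2) * p * (1 - p) ^ 4 -
          (dCoef m 0 + dCoef m 1) * (1 - p) ^ 5 +
          (((2 * m + 4).choose (m + 2) : ℝ) / (m + 3)) * p ^ 3 * (1 - p)) :=
  Wt_odd_minus_odd_general p m hm
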